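/- arXiv:0805.1272 — 5 statements merged into one kernel-verified Lean document; each statement's English description precedes it below -/
import Mathlib

section
/- For any integers m ≥ 1, n ≥ 1, any subset S of [m] = {1,2,…,m} with s = |S|, the sum over all complete (m+1)-ary trees T with n internal vertices of the product over all internal vertices v of T of (x + 1/ℍ_v^S) equals ((x+1)/n!) · ∏_{i=1}^{n-1} ((mn+i+1)(x+1) − (m−s+1)i), as an identity of polynomials in x over ℚ. -/
open Polynomial Finset

/-- A complete `m`-ary tree: a `leaf` is an external vertex and a `node`
has exactly `m` linearly ordered subtrees. -/
inductive MTree (m : ℕ) : Type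
  | leaf : MTree m
  | node : (Fin m → MTree m) → MTree m

namespace MTree

/-- The number of internal vertices of a complete `m`-ary tree. -/
def internals {m : ℕ} : MTree m → ℕ
  | leaf => 0
  | node c => 1 + ∑ i, (c i).internals

/-- The first kind of hook length of the root of `node c`: one plus the number of
internal vertices of all subtrees except the rightmost one. -/
def hook1 {m : ℕ} (c : Fin m → MTree m) : ℕ :=
  1 + ∑ i ∈ Finset.univ.filter (fun i : Fin m => (i : ℕ) + 1 < m), (c i).internals

/-- The product of `f (𝓗_v)` over all internal vertices `v` of a complete `m`-ary
tree, where `𝓗_v` is the first kind of hook length. -/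
def hookProd1 {m : ℕ} {R : Type*} [CommSemiring R] (f : ℕ → R) : MTree m → R
  | leaf => 1
  | node c => f (hook1 c) * ∏ i, hookProd1 f (c i)

/-- The number of internal vertices of the `(m+1-|S|)`-ary tree `T^S` obtained from a
complete `(m+1)`-ary tree `T` by recursively deleting, for every `r ∈ S ⊆ [m]`,
the `r`-th subtree of every remaining internal vertex (the label `r ∈ {1,…,m}`
corresponds to the child with index `r - 1`, i.e. to `Fin.castSucc` of `Fin m`). -/
def internalsS {m : ℕ} (S : Finset (Fin m)) : MTree (m + 1) → ℕ
  | leaf => 0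
  | node c => 1 + ∑ i ∈ (S.image Fin.castSucc)ᶜ, internalsS S (c i)

/-- The product of `f (ℍ_v^S)` over all internal vertices `v` of a complete
`(m+1)`-ary tree, where `ℍ_v^S` is the second kind of hook length. -/
def hookProdS {m : ℕ} {R : Type*} [CommSemiring R] (S : Finset (Fin m)) (f : ℕ → R) :
    MTree (m + 1) → R
  | leaf => 1
  | node c => f (internalsS S (node c)) * ∏ i, hookProdS S f (c i)

end MTree

/-!
Divide every factor `x + 1/ℍ_v^S` by `m - s - x` and let `Φ(u, z)` be the generating function of
the weighted trees, with `u` marking `|T^S|` and `z` the deleted vertices; `Ψ(z) = Φ(z, z)` counts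
trees by size. The root has hook `|T^S|`, its `m + 1 - s` kept children are counted by `Φ` and its
`s` deleted children by `Ψ`, so the coefficient of `uᵏ⁺¹` in `Φ` is the weight of hook `k + 1`
times the coefficient of `uᵏ` in `Φ^{m+1-s} Ψ^s`.

Let `R_t(n; y)` be the coefficient of `uⁿ` in `B_t(u)^y`, where `B_t = 1 + u B_tᵗ` is the
generalized binomial series, and `p = (x + 1)/(m - s - x)`. Then the coefficient of `uᵏ zᵈ` in `Φ`
is `R_{(m-s)p}(k; p) R_{mp}(d; spk)`: a Hagen–Rothe convolution shows that this shape is preserved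
by products, and the weight of hook `k + 1` is exactly the factor turning `R_{(m-s)p}(k; (m+1-s)p)`
into `R_{(m-s)p}(k+1; p)`, so induction on the total degree goes through. The same convolution
gives `Ψ = B_{mp}^p`, whose coefficients are the closed form. Being true for all rational
`x ≠ m - s`, the identity holds in `ℚ[X]`.
-/

section Raney

variable {F : Type*} [Field F]

/-- `R_t(n; y) = y/n! ∏_{j<n-1} (y + tn - 1 - j)` as a polynomial in `y`. -/
noncomputable def raneyPoly (t : F) : ℕ → F[X]
  | 0 => 1
  | n + 1 => C ((n + 1).factorial : F)⁻¹ * X * (descPochhammer F n).comp (X + C (t * (n + 1) - 1))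

noncomputable def raney (t : F) (n : ℕ) (y : F) : F := (raneyPoly t n).eval y

@[simp] theorem raney_zero (t y : F) : raney t 0 y = 1 := by simp [raney, raneyPoly]

theorem raney_succ (t : F) (n : ℕ) (y : F) :
    raney t (n + 1) y = ((n + 1).factorial : F)⁻¹ * y *
      (descPochhammer F n).eval (y + t * (n + 1) - 1) := by
  simp [raney, raneyPoly, add_sub_assoc]

theorem raney_zero_right (t : F) (n : ℕ) : raney t n 0 = if n = 0 then 1 else 0 := by
  cases n <;> simp [raney_succ]

theorem pow_succ_mul_raney_succ {c x p : F} (hp : (c - x) * p = x + 1) (M : F) (n : ℕ) :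
    (c - x) ^ (n + 1) * raney (M * p) (n + 1) p =
      ((n + 1).factorial : F)⁻¹ * (x + 1) *
        ∏ i ∈ Icc 1 n, ((M * (n + 1) + i + 1) * (x + 1) - (c + 1) * i) := by
  have hfactor : ∀ j ∈ range n, (M * (n + 1) + (1 + j : ℕ) + 1) * (x + 1) - (c + 1) * (1 + j : ℕ) =
      (c - x) * (p + M * p * (n + 1) - 1 - j) := by
    intro j _
    push_cast
    linear_combination (-(1 + M * (n + 1))) * hp
  rw [raney_succ, descPochhammer_eval_eq_prod_range, ← Ico_add_one_right_eq_Icc,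
    prod_Ico_eq_prod_range, Nat.add_sub_cancel, prod_congr rfl hfactor, prod_mul_distrib,
    prod_const, card_range, pow_succ]
  linear_combination ((n + 1).factorial : F)⁻¹ * (c - x) ^ n *
    (∏ j ∈ range n, (p + M * p * (n + 1) - 1 - j)) * hp

variable [CharZero F]

theorem raney_succ_eq_add (t : F) (n : ℕ) (y : F) :
    raney t (n + 1) y = raney t (n + 1) (y - 1) + raney t n (y + t - 1) := by
  rcases n with _ | n
  · simp [raney_succ]
  rw [raney_succ, raney_succ, raney_succ]
  push_cast
  -- all three terms are multiples of the falling factorial of length `n` at `b - 1`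
  obtain ⟨b, hb⟩ : ∃ b, y + t * (n + 1 + 1) - 1 = b := ⟨_, rfl⟩
  have h₁ : (descPochhammer F (n + 1)).eval b = b * (descPochhammer F n).eval (b - 1) := by
    simp [descPochhammer_succ_left]
  rw [show y - 1 + t * (n + 1 + 1) - 1 = b - 1 by rw [← hb]; ring,
    show y + t - 1 + t * (n + 1) - 1 = b - 1 by rw [← hb]; ring,
    hb, h₁, descPochhammer_succ_eval n (b - 1), Nat.factorial_succ (n + 1)]
  have : ((n + 1).factorial : F) ≠ 0 := Nat.cast_ne_zero.2 (Nat.factorial_ne_zero _)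
  have : (n + 1 + 1 : F) ≠ 0 := by exact_mod_cast (n + 1).succ_ne_zero
  push_cast
  field_simp
  subst hb
  ring

theorem Polynomial.eq_zero_of_eval_eq_eval_sub_one {D : F[X]}
    (hshift : ∀ y, D.eval y = D.eval (y - 1)) (h₀ : D.eval 0 = 0) : D = 0 := by
  refine eq_zero_of_infinite_isRoot D
    (Set.infinite_of_injective_forall_mem (f := ((↑) : ℕ → F)) Nat.cast_injective fun k => ?_)
  induction k with
  | zero => simpa using h₀
  | succ k ih => simpa [hshift ((k : F) + 1)] using ih

theorem sum_antidiagonal_raney_mul_raney (t σ : F) (n : ℕ) (y r : F) :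
    ∑ ij ∈ antidiagonal n, raney t ij.1 y * raney (t + σ) ij.2 (σ * ij.1 + r) =
      raney (t + σ) n (y + r) := by
  induction n generalizing y r with
  | zero => simp
  | succ n ih =>
    -- Both sides are polynomials in `y` with the same increments under `y ↦ y - 1`
    -- (by `raney_succ_eq_add` and `ih`) and the same value at `y = 0`.
    set D : F[X] := ∑ ij ∈ antidiagonal (n + 1),
        raneyPoly t ij.1 * C (raney (t + σ) ij.2 (σ * ij.1 + r)) -
      (raneyPoly (t + σ) (n + 1)).comp (X + C r)
    have hD : ∀ z, D.eval z = ∑ ij ∈ antidiagonal (n + 1),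
        raney t ij.1 z * raney (t + σ) ij.2 (σ * ij.1 + r) - raney (t + σ) (n + 1) (z + r) := by
      simp [D, eval_finsetSum, raney]
    suffices D = 0 by simpa [hD, sub_eq_zero] using congrArg (eval y) this
    refine eq_zero_of_eval_eq_eval_sub_one (fun z => ?_) ?_
    · have step : ∀ w, ∑ ij ∈ antidiagonal n,
          raney t (ij.1 + 1) w * raney (t + σ) ij.2 (σ * (ij.1 + 1 : ℕ) + r) =
          ∑ ij ∈ antidiagonal n,
            raney t (ij.1 + 1) (w - 1) * raney (t + σ) ij.2 (σ * (ij.1 + 1 : ℕ) + r) +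
          raney (t + σ) n (w + r + t + σ - 1) := by
        intro w
        simp_rw [raney_succ_eq_add t _ w, add_mul, sum_add_distrib]
        congr 1
        convert ih (w + t - 1) (σ + r) using 2 <;> push_cast <;> ring_nf
      rw [hD, hD, Nat.sum_antidiagonal_succ, Nat.sum_antidiagonal_succ, step z,
        raney_succ_eq_add (t + σ) n (z + r)]
      simp only [raney_zero]
      ring_nf
    · rw [hD, Nat.sum_antidiagonal_succ]
      simp [raney_zero_right]

theorem raney_add (t : F) (n : ℕ) (y r : F) :
    ∑ ij ∈ antidiagonal n, raney t ij.1 y * raney t ij.2 r = raney t n (y + r) := by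
  simpa using sum_antidiagonal_raney_mul_raney t 0 n y r

theorem inv_add_mul_raney {c x p : F} (hp : (c - x) * p = x + 1) (k : ℕ) :
    (x + (k + 1 : F)⁻¹) * raney (c * p) k ((c + 1) * p) = (c - x) * raney (c * p) (k + 1) p := by
  rcases k with _ | k
  · simp [raney_succ, hp]
  rw [raney_succ, raney_succ, descPochhammer_succ_eval, Nat.factorial_succ (k + 1)]
  push_cast
  rw [show (c + 1) * p + c * p * (k + 1) - 1 = p + c * p * (k + 1 + 1) - 1 by ring]
  have : ((k + 1).factorial : F) ≠ 0 := Nat.cast_ne_zero.2 (Nat.factorial_ne_zero _)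
  have : (k + 1 + 1 : F) ≠ 0 := by exact_mod_cast (k + 1).succ_ne_zero
  generalize (descPochhammer F k).eval (p + c * p * (k + 1 + 1) - 1) = Q
  field_simp
  linear_combination -(p * Q * (1 + (k + 1 + 1) * c)) * hp

end Raney

section Bivariate

variable {F : Type*} [Field F]

theorem Polynomial.prod_monomial {R ι : Type*} [CommSemiring R] (s : Finset ι) (n : ι → ℕ)
    (a : ι → R) : ∏ i ∈ s, monomial (n i) (a i) = monomial (∑ i ∈ s, n i) (∏ i ∈ s, a i) := by
  induction s using Finset.cons_induction with
  | empty => simp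
  | cons i s hi ih => simp [ih, monomial_mul_monomial]

theorem Polynomial.coeff_eval_X {R : Type*} [CommSemiring R] (Φ : R[X][X]) (n : ℕ) :
    (Φ.eval X).coeff n = ∑ kd ∈ antidiagonal n, (Φ.coeff kd.1).coeff kd.2 := by
  induction Φ using Polynomial.induction_on' with
  | add Φ Ψ hΦ hΨ => simp [hΦ, hΨ, sum_add_distrib]
  | monomial k a =>
    simp only [eval_monomial, coeff_mul_X_pow', coeff_monomial,
      Nat.sum_antidiagonal_eq_sum_range_succ_mk]
    rw [sum_congr rfl fun x _ => apply_ite (coeff · (n - x)) _ _ _]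
    simp

/-- The coefficient of `uᵉ zᵟ` in `B_t(u B_{t+σ}(z)^σ)^y B_{t+σ}(z)^l`. -/
noncomputable def raney₂ (t σ y l : F) (e δ : ℕ) : F :=
  raney t e y * raney (t + σ) δ (σ * e + l)

def AgreesUpTo (N : ℕ) (Φ : F[X][X]) (g : ℕ → ℕ → F) : Prop :=
  ∀ e δ, e + δ ≤ N → (Φ.coeff e).coeff δ = g e δ

theorem agreesUpTo_one (N : ℕ) (t σ : F) : AgreesUpTo N 1 (raney₂ t σ 0 0) := by
  intro e δ _
  rcases e with _ | e <;> simp [raney₂, coeff_one, raney_zero_right]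

variable [CharZero F]

namespace AgreesUpTo

variable {N : ℕ} {Φ Ψ : F[X][X]} {t σ y l : F}

theorem mul {y' l' : F} (hΦ : AgreesUpTo N Φ (raney₂ t σ y l))
    (hΨ : AgreesUpTo N Ψ (raney₂ t σ y' l')) :
    AgreesUpTo N (Φ * Ψ) (raney₂ t σ (y + y') (l + l')) := by
  intro e δ hN
  have hδ : ∀ ee ∈ antidiagonal e, ∑ dd ∈ antidiagonal δ,
      (Φ.coeff ee.1).coeff dd.1 * (Ψ.coeff ee.2).coeff dd.2 =
        raney t ee.1 y * raney t ee.2 y' * raney (t + σ) δ (σ * e + (l + l')) := by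
    rintro ⟨e₁, e₂⟩ he
    rw [HasAntidiagonal.mem_antidiagonal] at he
    calc ∑ dd ∈ antidiagonal δ, (Φ.coeff e₁).coeff dd.1 * (Ψ.coeff e₂).coeff dd.2
        = ∑ dd ∈ antidiagonal δ, raney₂ t σ y l e₁ dd.1 * raney₂ t σ y' l' e₂ dd.2 :=
          sum_congr rfl fun dd hd => by
            rw [HasAntidiagonal.mem_antidiagonal] at hd
            rw [hΦ _ _ (by omega), hΨ _ _ (by omega)]
      _ = raney t e₁ y * raney t e₂ y' * ∑ dd ∈ antidiagonal δ,
            raney (t + σ) dd.1 (σ * e₁ + l) * raney (t + σ) dd.2 (σ * e₂ + l') := by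
          rw [mul_sum]
          exact sum_congr rfl fun _ _ => by simp only [raney₂]; ring
      _ = _ := by
          rw [raney_add, ← he]
          push_cast
          ring_nf
  rw [coeff_mul, finsetSum_coeff, sum_congr rfl fun ee _ => coeff_mul _ _ _, sum_congr rfl hδ,
    ← sum_mul, raney_add, raney₂]

theorem pow (h : AgreesUpTo N Φ (raney₂ t σ y l)) (j : ℕ) :
    AgreesUpTo N (Φ ^ j) (raney₂ t σ (j * y) (j * l)) := by
  induction j with
  | zero => simpa using agreesUpTo_one N t σ
  | succ j ih => simpa [pow_succ, add_mul] using ih.mul h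

theorem coeff_eval_X (h : AgreesUpTo N Φ (raney₂ t σ y 0)) {n : ℕ} (hn : n ≤ N) :
    (Φ.eval X).coeff n = raney (t + σ) n y := by
  rw [Polynomial.coeff_eval_X, sum_congr rfl fun kd hkd => h _ _ (by
    rw [HasAntidiagonal.mem_antidiagonal] at hkd; omega)]
  simpa [raney₂] using sum_antidiagonal_raney_mul_raney t σ n y 0

theorem C_eval_X (h : AgreesUpTo N Φ (raney₂ t σ y 0)) :
    AgreesUpTo N (C (Φ.eval X)) (raney₂ t σ 0 y) := by
  intro e δ hN
  rcases e with _ | e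
  · simp [raney₂, h.coeff_eval_X (show δ ≤ N by omega)]
  · simp [raney₂, raney_zero_right]

end AgreesUpTo

end Bivariate

namespace MTree

section Enumeration

variable {μ : ℕ}

theorem node_injective : Function.Injective (node : (Fin μ → MTree μ) → MTree μ) :=
  fun _ _ h => node.inj h

def heightLE : ℕ → Finset (MTree μ)
  | 0 => {leaf}
  | N + 1 => cons leaf ((Fintype.piFinset fun _ => heightLE N).map ⟨node, node_injective⟩)
      (by simp)

theorem heightLE_succ (N : ℕ) :
    heightLE (N + 1) = cons (leaf : MTree μ)
      ((Fintype.piFinset fun _ => heightLE N).map ⟨node, node_injective⟩) (by simp) := rfl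

theorem leaf_mem_heightLE (N : ℕ) : (leaf : MTree μ) ∈ heightLE N := by
  cases N <;> simp [heightLE]

theorem mem_heightLE_of_internals_le {T : MTree μ} {N : ℕ} (h : T.internals ≤ N) :
    T ∈ heightLE N := by
  induction T generalizing N with
  | leaf => exact leaf_mem_heightLE N
  | node c ih =>
    obtain ⟨N, rfl⟩ : ∃ N', N = N' + 1 := ⟨N - 1, by simp [internals] at h; omega⟩
    simp only [heightLE_succ, mem_cons, mem_map, Fintype.mem_piFinset]
    refine Or.inr ⟨c, fun i => ih i ?_, rfl⟩
    have := single_le_sum (fun j _ => Nat.zero_le ((c j).internals)) (mem_univ i)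
    simp only [internals] at h
    omega

def treesWith (n : ℕ) : Finset (MTree μ) := (heightLE n).filter (·.internals = n)

theorem mem_treesWith {n : ℕ} {T : MTree μ} : T ∈ treesWith n ↔ T.internals = n := by
  simp only [treesWith, mem_filter, and_iff_right_iff_imp]
  exact fun h => mem_heightLE_of_internals_le h.le

theorem filter_heightLE_eq_treesWith {n N : ℕ} (h : n ≤ N) :
    (heightLE N).filter (·.internals = n) = (treesWith n : Finset (MTree μ)) := by
  ext T
  simp only [mem_filter, mem_treesWith, and_iff_right_iff_imp]
  exact fun hT => mem_heightLE_of_internals_le (hT ▸ h)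

end Enumeration

section Hooks

variable {m : ℕ} (S : Finset (Fin m))

def deletedInternals : MTree (m + 1) → ℕ
  | leaf => 0
  | node c => ∑ i ∈ (S.image Fin.castSucc)ᶜ, deletedInternals (c i) +
      ∑ i ∈ S.image Fin.castSucc, (c i).internals

theorem internalsS_add_deletedInternals (T : MTree (m + 1)) :
    internalsS S T + deletedInternals S T = T.internals := by
  induction T with
  | leaf => rfl
  | node c ih =>
    simp only [internalsS, deletedInternals, internals]
    rw [← sum_add_sum_compl (S.image Fin.castSucc)ᶜ (fun i => (c i).internals), compl_compl]
    simp only [← ih, sum_add_distrib]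
    ring

theorem internalsS_eq_zero_iff {T : MTree (m + 1)} : internalsS S T = 0 ↔ T = leaf := by
  cases T <;> simp [internalsS]

theorem map_hookProdS {R R' : Type*} [CommSemiring R] [CommSemiring R'] (φ : R →+* R')
    (f : ℕ → R) (T : MTree (m + 1)) : φ (hookProdS S f T) = hookProdS S (fun h => φ (f h)) T := by
  induction T with
  | leaf => exact map_one φ
  | node c ih => simp [hookProdS, map_prod, ih]

theorem hookProdS_const_mul {R : Type*} [CommSemiring R] (a : R) (f : ℕ → R) (T : MTree (m + 1)) :
    hookProdS S (fun h => a * f h) T = a ^ T.internals * hookProdS S f T := by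
  induction T with
  | leaf => simp [hookProdS, internals]
  | node c ih =>
    simp only [hookProdS, internals, ih, prod_mul_distrib, prod_pow_eq_pow_sum]
    ring

end Hooks
section HookSeries

variable {m : ℕ} (S : Finset (Fin m)) {F : Type*} [Field F] (f : ℕ → F)

/-- `u^{|T^S|} z^{|T| - |T^S|}` times the hook product, with `u` the outer variable. -/
noncomputable def hookMonomial (T : MTree (m + 1)) : F[X][X] :=
  monomial (internalsS S T) (monomial (deletedInternals S T) (hookProdS S f T))

noncomputable def hookSeries (N : ℕ) : F[X][X] := ∑ T ∈ heightLE N, hookMonomial S f T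

/-- A child in a position of `S` is deleted together with its descendants, so it only counts
towards `z`. -/
noncomputable def childMonomial (i : Fin (m + 1)) (T : MTree (m + 1)) : F[X][X] :=
  if i ∈ (S.image Fin.castSucc)ᶜ then hookMonomial S f T else C ((hookMonomial S f T).eval X)

theorem eval_X_hookMonomial (T : MTree (m + 1)) :
    (hookMonomial S f T).eval X = monomial T.internals (hookProdS S f T) := by
  rw [hookMonomial, eval_monomial, X_pow_eq_monomial, monomial_mul_monomial, mul_one, add_comm,
    internalsS_add_deletedInternals]

theorem childMonomial_eq (i : Fin (m + 1)) (T : MTree (m + 1)) :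
    childMonomial S f i T =
      monomial (if i ∈ (S.image Fin.castSucc)ᶜ then internalsS S T else 0)
        (monomial (if i ∈ (S.image Fin.castSucc)ᶜ then deletedInternals S T else T.internals)
          (hookProdS S f T)) := by
  unfold childMonomial
  split_ifs
  · rfl
  · rw [eval_X_hookMonomial, monomial_zero_left]

theorem X_mul_prod_childMonomial (c : Fin (m + 1) → MTree (m + 1)) :
    X * ∏ i, childMonomial S f i (c i) =
      monomial (internalsS S (node c))
        (monomial (deletedInternals S (node c)) (∏ i, hookProdS S f (c i))) := by
  simp only [childMonomial_eq, Polynomial.prod_monomial, ← monomial_one_one_eq_X,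
    monomial_mul_monomial, one_mul, internalsS, deletedInternals]
  congr 2
  · rw [sum_ite_mem, univ_inter]
  · rw [sum_ite, filter_mem_eq_inter, univ_inter, filter_not, filter_mem_eq_inter, univ_inter,
      ← compl_eq_univ_sdiff, compl_compl]

theorem coeff_succ_hookMonomial_node (c : Fin (m + 1) → MTree (m + 1)) (k : ℕ) :
    (hookMonomial S f (node c)).coeff (k + 1) =
      C (f (k + 1)) * (∏ i, childMonomial S f i (c i)).coeff k := by
  rw [← coeff_X_mul (p := ∏ i, childMonomial S f i (c i)), X_mul_prod_childMonomial, hookMonomial,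
    hookProdS, coeff_monomial, coeff_monomial]
  split_ifs with h
  · rw [h, ← C_mul_monomial]
  · rw [mul_zero]

theorem hookMonomial_leaf : hookMonomial S f leaf = 1 := by
  simp [hookMonomial, internalsS, deletedInternals, hookProdS]

theorem coeff_zero_hookSeries (N : ℕ) : (hookSeries S f N).coeff 0 = 1 := by
  rw [hookSeries, finsetSum_coeff, sum_eq_single_of_mem leaf (leaf_mem_heightLE N) fun T _ hT => ?_]
  · rw [hookMonomial_leaf, coeff_one_zero]
  · rw [hookMonomial, coeff_monomial, if_neg (mt (internalsS_eq_zero_iff S).1 hT)]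

theorem sum_prod_childMonomial (N : ℕ) :
    ∑ c ∈ Fintype.piFinset (fun _ => heightLE N), ∏ i, childMonomial S f i (c i) =
      hookSeries S f N ^ (m + 1 - #S) * C ((hookSeries S f N).eval X) ^ #S := by
  have hchild : ∀ i, ∑ T ∈ heightLE N, childMonomial S f i T =
      if i ∈ (S.image Fin.castSucc)ᶜ then hookSeries S f N else C ((hookSeries S f N).eval X) := by
    intro i
    unfold childMonomial
    split_ifs <;> simp [hookSeries, eval_finsetSum]
  rw [← prod_univ_sum, prod_congr rfl fun i _ => hchild i, prod_ite, prod_const, prod_const,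
    filter_mem_eq_inter, univ_inter, filter_not, filter_mem_eq_inter, univ_inter,
    ← compl_eq_univ_sdiff, compl_compl, card_compl,
    card_image_of_injective _ (Fin.castSucc_injective m), Fintype.card_fin]

theorem coeff_succ_hookSeries_succ (N k : ℕ) :
    (hookSeries S f (N + 1)).coeff (k + 1) =
      C (f (k + 1)) *
        (hookSeries S f N ^ (m + 1 - #S) * C ((hookSeries S f N).eval X) ^ #S).coeff k := by
  rw [hookSeries, heightLE_succ, sum_cons, sum_map, coeff_add, hookMonomial_leaf, coeff_one,
    if_neg k.succ_ne_zero, zero_add, ← sum_prod_childMonomial, finsetSum_coeff, finsetSum_coeff,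
    mul_sum]
  exact sum_congr rfl fun c _ => coeff_succ_hookMonomial_node S f c k

theorem coeff_eval_X_hookSeries {n N : ℕ} (h : n ≤ N) :
    ((hookSeries S f N).eval X).coeff n = ∑ T ∈ treesWith n, hookProdS S f T := by
  simp only [hookSeries, eval_finsetSum, eval_X_hookMonomial, finsetSum_coeff, coeff_monomial]
  rw [← sum_filter, ← filter_heightLE_eq_treesWith h]

end HookSeries

section RaneyWeights

variable {m : ℕ} (S : Finset (Fin m)) {F : Type*} [Field F] [CharZero F] {f : ℕ → F} {t p : F}

theorem agreesUpTo_hookSeries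
    (hf : ∀ k, f (k + 1) * raney t k ((m + 1 - #S : ℕ) * p) = raney t (k + 1) p) (N : ℕ) :
    AgreesUpTo N (hookSeries S f N) (raney₂ t (#S * p) p 0) := by
  induction N with
  | zero =>
    intro e δ h
    obtain ⟨rfl, rfl⟩ : e = 0 ∧ δ = 0 := by omega
    simp [coeff_zero_hookSeries, raney₂]
  | succ N ih =>
    have hprod := (ih.pow (m + 1 - #S)).mul (ih.C_eval_X.pow #S)
    rintro (_ | k) δ hN
    · simp [coeff_zero_hookSeries, raney₂, coeff_one, raney_zero_right]
    · rw [coeff_succ_hookSeries_succ, coeff_C_mul, hprod k δ (by omega), raney₂, raney₂, ← hf,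
        mul_zero, add_zero, mul_zero, zero_add]
      push_cast
      ring_nf

theorem sum_treesWith_hookProdS
    (hf : ∀ k, f (k + 1) * raney t k ((m + 1 - #S : ℕ) * p) = raney t (k + 1) p) (n : ℕ) :
    ∑ T ∈ treesWith n, hookProdS S f T = raney (t + #S * p) n p := by
  rw [← coeff_eval_X_hookSeries S f le_rfl]
  exact (agreesUpTo_hookSeries S hf n).coeff_eval_X le_rfl

theorem sum_treesWith_hookProdS_add_inv {x : F} (hx : x ≠ m - #S) (n : ℕ) :
    ∑ T ∈ treesWith (n + 1), hookProdS S (fun h => x + (h : F)⁻¹) T =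
      ((n + 1).factorial : F)⁻¹ * (x + 1) *
        ∏ i ∈ Icc 1 n, ((m * (n + 1) + i + 1) * (x + 1) - (m - #S + 1) * i) := by
  set c : F := m - #S
  have ha : c - x ≠ 0 := sub_ne_zero.2 hx.symm
  set p := (x + 1) / (c - x)
  have hp : (c - x) * p = x + 1 := mul_div_cancel₀ _ ha
  have hf : ∀ k, (c - x)⁻¹ * (x + ((k + 1 : ℕ) : F)⁻¹) * raney (c * p) k ((m + 1 - #S : ℕ) * p)
      = raney (c * p) (k + 1) p := by
    intro k
    have hS : #S ≤ m := by simpa using S.card_le_univ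
    have hcast : ((m + 1 - #S : ℕ) : F) = c + 1 := by
      rw [Nat.cast_sub (by omega)]
      push_cast
      ring
    rw [hcast, mul_assoc, Nat.cast_add_one, inv_add_mul_raney hp, inv_mul_cancel_left₀ ha]
  have hscale : ∀ T : MTree (m + 1), hookProdS S (fun h => x + (h : F)⁻¹) T =
      (c - x) ^ T.internals * hookProdS S (fun h => (c - x)⁻¹ * (x + (h : F)⁻¹)) T := by
    intro T
    simp [← hookProdS_const_mul, mul_inv_cancel_left₀ ha]
  rw [sum_congr rfl fun T hT => by rw [hscale, mem_treesWith.1 hT], ← mul_sum,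
    sum_treesWith_hookProdS S (f := fun h => (c - x)⁻¹ * (x + (h : F)⁻¹)) hf,
    show c * p + #S * p = (m : F) * p by ring, pow_succ_mul_raney_succ hp]

end RaneyWeights

end MTree

theorem hook_length_formula_second_kind_general (m n : ℕ) (hn : 1 ≤ n)
    (S : Finset (Fin m)) :
    (∑ᶠ T ∈ {T : MTree (m + 1) | T.internals = n},
        MTree.hookProdS S (fun h => (X : ℚ[X]) + C ((h : ℚ)⁻¹)) T)
      = C ((n.factorial : ℚ)⁻¹) * ((X : ℚ[X]) + 1) *
          ∏ i ∈ Finset.Icc 1 (n - 1),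
            (C ((m : ℚ) * n + (i : ℚ) + 1) * ((X : ℚ[X]) + 1) -
              C (((m : ℚ) - (S.card : ℚ) + 1) * (i : ℚ))) := by
  obtain ⟨n, rfl⟩ := Nat.exists_eq_add_of_le' hn
  have hset : {T : MTree (m + 1) | T.internals = n + 1} =
      (MTree.treesWith (μ := m + 1) (n + 1) : Set (MTree (m + 1))) := by
    ext T
    simp [MTree.mem_treesWith]
  rw [hset, finsum_mem_coe_finset]
  refine eq_of_infinite_eval_eq _ _ ((Set.finite_singleton ((m : ℚ) - #S)).infinite_compl.mono
    fun x hx => ?_)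
  have := MTree.sum_treesWith_hookProdS_add_inv S hx n
  simp only [eval_finsetSum, ← coe_evalRingHom, MTree.map_hookProdS] at this ⊢
  simpa [eval_prod] using this

/-- **Theorem 1.2, first form (Sun–Zhang).**  For `m ≥ 1`, `n ≥ 1` and `S ⊆ [m]`
with `s = |S|`,
`∑_{T ∈ 𝒯_{n,m+1}} ∏_{v ∈ 𝓘(T)} (x + 1/ℍ_v^S)
  = ((x+1)/n!) ∏_{i=1}^{n-1} ((mn+i+1)(x+1) - (m-s+1)i)` in `ℚ[x]`. -/
theorem hook_length_formula_second_kind (m n : ℕ) (hm : 1 ≤ m) (hn : 1 ≤ n)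
    (S : Finset (Fin m)) :
    (∑ᶠ T ∈ {T : MTree (m + 1) | T.internals = n},
        MTree.hookProdS S (fun h => (X : ℚ[X]) + C ((h : ℚ)⁻¹)) T)
      = C ((n.factorial : ℚ)⁻¹) * ((X : ℚ[X]) + 1) *
          ∏ i ∈ Finset.Icc 1 (n - 1),
            (C ((m : ℚ) * n + (i : ℚ) + 1) * ((X : ℚ[X]) + 1) -
              C (((m : ℚ) - (S.card : ℚ) + 1) * (i : ℚ))) :=
  hook_length_formula_second_kind_general m n hn S
end

section
/- For any integers m ≥ 2 and n ≥ 1, the sum over all complete m-ary trees T with n internal vertices of the product over all internal vertices v of T of (m − 1/𝓗_v) equals (m−1)^n · (mn+1)^{n−1} / n!. -/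
/-!
Write `c = m - 1` and let `B_n(x) = x (x + n z)^(n-1) / n!`, with `z = c m`, be the divided Abel
polynomials; they are of binomial type, `B_n(x + y) = ∑_{a+b=n} B_a(x) B_b(y)`. Splitting a tree at
its root, whose hook length is one more than the size `b` of its first `m - 1` subtrees, gives
`F_{n+1} = ∑_{a+b=n} (m - 1/(1+b)) F_a G_b` for `F_n = ∑_T ∏_v (m - 1/𝓗_v)`, where `G_b` sums
`F_{k_1} ⋯ F_{k_{m-1}}` over the compositions of `b`. By induction `F_n = B_n(c)`: binomial type gives
`G_b = B_b(c²)`, and `(m - 1/(1+b)) B_b(c²) = -B_{b+1}(-c)` turns the recursion into the expansion of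
`B_{n+1}(c + (-c)) = 0`.
-/

open Polynomial Finset

theorem Polynomial.eq_of_derivative_eq_of_eval_zero_eq {R : Type*} [Ring R] [IsAddTorsionFree R]
    {p q : R[X]} (hd : derivative p = derivative q)
    (h0 : p.eval 0 = q.eval 0) : p = q := by
  have hc := eq_C_of_derivative_eq_zero (p := p - q) (by rw [derivative_sub, hd, sub_self])
  rwa [coeff_zero_eq_eval_zero, eval_sub, h0, sub_self, map_zero, sub_eq_zero] at hc

theorem Finset.Nat.sum_antidiagonalTuple_succ_snoc {M : Type*} [AddCommMonoid M] (r n : ℕ)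
    (g : (Fin (r + 1) → ℕ) → M) :
    ∑ k ∈ antidiagonalTuple (r + 1) n, g k =
      ∑ p ∈ antidiagonal n, ∑ k ∈ antidiagonalTuple r p.2, g (Fin.snoc k p.1) := by
  rw [Finset.sum_sigma']
  refine Finset.sum_nbij' (fun k => ⟨(k (Fin.last r), ∑ i : Fin r, k i.castSucc), Fin.init k⟩)
    (fun x => Fin.snoc x.2 x.1.1) ?_ ?_ ?_ ?_ ?_
  · intro k hk
    rw [mem_antidiagonalTuple, Fin.sum_univ_castSucc] at hk
    simp only [mem_sigma, HasAntidiagonal.mem_antidiagonal, mem_antidiagonalTuple]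
    exact ⟨by rw [← hk, add_comm], rfl⟩
  · rintro ⟨⟨a, b⟩, k⟩ hk
    simp only [mem_sigma, HasAntidiagonal.mem_antidiagonal, mem_antidiagonalTuple] at hk
    rw [mem_antidiagonalTuple, Fin.sum_univ_castSucc]
    simp only [Fin.snoc_castSucc, Fin.snoc_last, hk.2, ← hk.1, add_comm]
  · intro k _
    exact Fin.snoc_init_self k
  · rintro ⟨⟨a, b⟩, k⟩ hk
    simp only [mem_sigma, HasAntidiagonal.mem_antidiagonal, mem_antidiagonalTuple] at hk
    simp only [Fin.snoc_last, Fin.snoc_castSucc, Fin.init_snoc, hk.2]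
  · intro k _
    rw [Fin.snoc_init_self]

section Abel

variable {K : Type*} [Field K]

noncomputable def abelPoly (z : K) : ℕ → K[X]
  | 0 => 1
  | n + 1 => C (((n + 1).factorial : K)⁻¹) * X * (X + C ((n + 1 : ℕ) * z)) ^ n

@[simp]
theorem abelPoly_zero (z : K) : abelPoly z 0 = 1 := rfl

theorem eval_abelPoly_succ (z : K) (n : ℕ) (x : K) :
    (abelPoly z (n + 1)).eval x = x * (x + (n + 1) * z) ^ n / (n + 1).factorial := by
  simp [abelPoly, div_eq_inv_mul, mul_assoc]

theorem eval_zero_abelPoly_succ (z : K) (n : ℕ) : (abelPoly z (n + 1)).eval 0 = 0 := by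
  simp [eval_abelPoly_succ]

variable [CharZero K]

theorem derivative_abelPoly_succ (z : K) (n : ℕ) :
    derivative (abelPoly z (n + 1)) = (abelPoly z n).comp (X + C z) := by
  cases n with
  | zero => simp [abelPoly]
  | succ n =>
    have hfac : ((n + 2).factorial : K)⁻¹ * (n + 2) = ((n + 1).factorial : K)⁻¹ := by
      rw [Nat.factorial_succ (n + 1), Nat.cast_mul, mul_inv, mul_right_comm]
      push_cast
      rw [add_assoc, one_add_one_eq_two, inv_mul_cancel₀ (by norm_cast), one_mul]
    simp only [abelPoly, derivative_mul, derivative_C, derivative_X, derivative_pow,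
      derivative_add, mul_comp, pow_comp, add_comp, X_comp, C_comp]
    push_cast
    simp only [C_add, C_mul, C_1, map_natCast, map_ofNat, ← hfac, pow_succ]
    ring

theorem abelPoly_comp_X_add_C (z : K) (n : ℕ) (y : K) :
    (abelPoly z n).comp (X + C y) =
      ∑ p ∈ antidiagonal n, abelPoly z p.1 * C ((abelPoly z p.2).eval y) := by
  induction n with
  | zero => simp [abelPoly]
  | succ n ih =>
    refine eq_of_derivative_eq_of_eval_zero_eq ?_ ?_
    · have hd0 : derivative (abelPoly z 0 * C ((abelPoly z (n + 1)).eval y)) = 0 := by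
        rw [abelPoly_zero, one_mul, derivative_C]
      rw [Finset.Nat.sum_antidiagonal_succ, derivative_add, derivative_sum, hd0, zero_add]
      simp only [derivative_mul, derivative_C, mul_zero, add_zero, derivative_abelPoly_succ,
        derivative_comp, derivative_add, derivative_X, one_mul]
      have hswap : (X + C z).comp (X + C y) = (X + C y).comp (X + C z) := by
        simp only [add_comp, X_comp, C_comp, add_right_comm]
      rw [comp_assoc, hswap, ← comp_assoc, ih, Polynomial.sum_comp]
      simp only [mul_comp, C_comp]
    · rw [Finset.Nat.sum_antidiagonal_succ, eval_add, eval_finsetSum]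
      simp [abelPoly_zero, eval_comp, eval_zero_abelPoly_succ]

theorem eval_add_abelPoly (z : K) (n : ℕ) (x y : K) :
    (abelPoly z n).eval (x + y) =
      ∑ p ∈ antidiagonal n, (abelPoly z p.1).eval x * (abelPoly z p.2).eval y := by
  simpa [eval_comp, eval_finsetSum] using congrArg (eval x) (abelPoly_comp_X_add_C z n y)

theorem sum_antidiagonalTuple_prod_eval_abelPoly (z : K) (r n : ℕ) (x : K) :
    ∑ k ∈ Finset.Nat.antidiagonalTuple r n, ∏ i, (abelPoly z (k i)).eval x =
      (abelPoly z n).eval (r * x) := by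
  induction r generalizing n with
  | zero =>
    cases n with
    | zero => simp
    | succ n => simp [eval_zero_abelPoly_succ]
  | succ r ih =>
    simp only [Finset.Nat.sum_antidiagonalTuple_succ_snoc, Fin.prod_univ_castSucc,
      Fin.snoc_castSucc, Fin.snoc_last, ← Finset.sum_mul, ih]
    rw [Nat.cast_succ, add_one_mul, add_comm, eval_add_abelPoly]
    exact Finset.sum_congr rfl fun p _ => mul_comm _ _

theorem hook_factor_mul_eval_abelPoly (c : K) (b : ℕ) :
    (c + 1 - ((1 + b : ℕ) : K)⁻¹) * (abelPoly (c * (c + 1)) b).eval (c * c) =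
      -(abelPoly (c * (c + 1)) (b + 1)).eval (-c) := by
  cases b with
  | zero => simp [eval_abelPoly_succ]
  | succ b =>
    have hb : (b : K) + 1 + 1 ≠ 0 := by norm_cast
    have hfac : ((b + 1).factorial : K) ≠ 0 := Nat.cast_ne_zero.mpr (Nat.factorial_ne_zero _)
    rw [eval_abelPoly_succ, eval_abelPoly_succ, Nat.factorial_succ (b + 1)]
    push_cast
    rw [← add_assoc, add_comm 1 (b : K)]
    field_simp
    ring

theorem sum_antidiagonal_hook_factor_eval_abelPoly (c : K) (n : ℕ) :
    ∑ p ∈ antidiagonal n, (c + 1 - ((1 + p.2 : ℕ) : K)⁻¹) *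
        ((abelPoly (c * (c + 1)) p.1).eval c * (abelPoly (c * (c + 1)) p.2).eval (c * c)) =
      (abelPoly (c * (c + 1)) (n + 1)).eval c := by
  have hzero := eval_add_abelPoly (c * (c + 1)) (n + 1) c (-c)
  rw [add_neg_cancel, eval_zero_abelPoly_succ, Finset.Nat.sum_antidiagonal_succ'] at hzero
  simp only [abelPoly_zero, eval_one, mul_one] at hzero
  rw [eq_neg_of_add_eq_zero_left hzero.symm, ← Finset.sum_neg_distrib]
  refine Finset.sum_congr rfl fun p _ => ?_
  rw [mul_left_comm, hook_factor_mul_eval_abelPoly, mul_neg]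

end Abel

namespace MTree

variable {m : ℕ}

theorem internals_node (c : Fin m → MTree m) :
    (node c).internals = 1 + ∑ i, (c i).internals := rfl

theorem finite_setOf_internals_le (n : ℕ) : {T : MTree m | T.internals ≤ n}.Finite := by
  induction n with
  | zero =>
    refine (Set.finite_singleton leaf).subset ?_
    rintro (_ | c) h
    · rfl
    · simp [internals_node] at h
  | succ n ih =>
    refine ((Set.finite_singleton leaf).union ((Set.Finite.pi fun _ => ih).image node)).subset ?_
    rintro (_ | c) h
    · exact Or.inl rfl
    · refine Or.inr ⟨c, fun i _ => ?_, rfl⟩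
      have hi := Finset.single_le_sum (fun j _ => Nat.zero_le ((c j).internals)) (mem_univ i)
      simp only [Set.mem_ofPred_eq, internals_node] at h ⊢
      omega

noncomputable def treesOfSize (m n : ℕ) : Finset (MTree m) :=
  ((finite_setOf_internals_le n).subset fun _ (h : _ = n) => h.le).toFinset

theorem mem_treesOfSize {n : ℕ} {T : MTree m} : T ∈ treesOfSize m n ↔ T.internals = n :=
  Set.Finite.mem_toFinset _

theorem coe_treesOfSize (n : ℕ) :
    (treesOfSize m n : Set (MTree m)) = {T | T.internals = n} :=
  Set.Finite.coe_toFinset _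

theorem treesOfSize_zero : treesOfSize m 0 = {leaf} := by
  ext (_ | c) <;> simp [mem_treesOfSize, internals]

theorem sum_treesOfSize_succ {M : Type*} [AddCommMonoid M] (g : MTree m → M) (n : ℕ) :
    ∑ T ∈ treesOfSize m (n + 1), g T =
      ∑ k ∈ Finset.Nat.antidiagonalTuple m n,
        ∑ c ∈ Fintype.piFinset fun i => treesOfSize m (k i), g (node c) := by
  rw [Finset.sum_sigma']
  symm
  refine Finset.sum_bij (fun x _ => node x.2) ?_ ?_ ?_ fun _ _ => rfl
  · rintro ⟨k, c⟩ hkc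
    simp only [mem_sigma, Finset.Nat.mem_antidiagonalTuple, Fintype.mem_piFinset,
      mem_treesOfSize] at hkc
    rw [mem_treesOfSize, internals_node, Finset.sum_congr rfl fun i _ => hkc.2 i, hkc.1,
      add_comm]
  · rintro ⟨k, c⟩ hkc ⟨k', c'⟩ hkc' h
    simp only [mem_sigma, Fintype.mem_piFinset, mem_treesOfSize] at hkc hkc'
    obtain rfl : c = c' := node.inj h
    obtain rfl : k = k' := funext fun i => (hkc.2 i).symm.trans (hkc'.2 i)
    rfl
  · rintro (_ | c) hT
    · simp [mem_treesOfSize, internals] at hT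
    · refine ⟨⟨fun i => (c i).internals, c⟩, ?_, rfl⟩
      rw [mem_treesOfSize, internals_node] at hT
      simp only [mem_sigma, Finset.Nat.mem_antidiagonalTuple, Fintype.mem_piFinset,
        mem_treesOfSize, implies_true, and_true]
      omega

section HookSum

variable {R : Type*} [CommSemiring R]

noncomputable def hookSum (m : ℕ) (f : ℕ → R) (n : ℕ) : R :=
  ∑ T ∈ treesOfSize m n, hookProd1 f T

theorem hookSum_zero (f : ℕ → R) : hookSum m f 0 = 1 := by
  simp [hookSum, treesOfSize_zero, hookProd1]

theorem hookSum_succ (f : ℕ → R) (n : ℕ) :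
    hookSum m f (n + 1) =
      ∑ k ∈ Finset.Nat.antidiagonalTuple m n,
        f (1 + ∑ i ∈ univ.filter fun i : Fin m => (i : ℕ) + 1 < m, k i) *
          ∏ i, hookSum m f (k i) := by
  rw [hookSum, sum_treesOfSize_succ]
  refine Finset.sum_congr rfl fun k _ => ?_
  have hhook : ∀ c ∈ Fintype.piFinset fun i => treesOfSize m (k i),
      hook1 c = 1 + ∑ i ∈ univ.filter fun i : Fin m => (i : ℕ) + 1 < m, k i := fun c hc =>
    congrArg _ (Finset.sum_congr rfl fun i _ => mem_treesOfSize.mp (Fintype.mem_piFinset.mp hc i))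
  simp only [hookProd1]
  rw [Finset.sum_congr rfl fun c hc => by rw [hhook c hc], ← Finset.mul_sum]
  simp only [hookSum, Finset.prod_univ_sum]

theorem hookSum_succ_eq_sum_antidiagonal (r : ℕ) (f : ℕ → R) (n : ℕ) :
    hookSum (r + 1) f (n + 1) =
      ∑ p ∈ antidiagonal n, f (1 + p.2) *
        (hookSum (r + 1) f p.1 *
          ∑ k ∈ Finset.Nat.antidiagonalTuple r p.2, ∏ i, hookSum (r + 1) f (k i)) := by
  have hfilter : univ.filter (fun i : Fin (r + 1) => (i : ℕ) + 1 < r + 1) =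
      univ.map Fin.castSuccEmb := by
    ext i
    simp only [mem_filter, mem_univ, true_and, mem_map, Fin.coe_castSuccEmb]
    rw [Fin.exists_castSucc_eq, Ne, Fin.ext_iff, Fin.val_last]
    omega
  rw [hookSum_succ, Finset.Nat.sum_antidiagonalTuple_succ_snoc]
  refine Finset.sum_congr rfl fun p _ => ?_
  rw [Finset.mul_sum, Finset.mul_sum]
  refine Finset.sum_congr rfl fun k hk => ?_
  rw [Finset.Nat.mem_antidiagonalTuple] at hk
  simp only [hfilter, Finset.sum_map, Fin.coe_castSuccEmb, Fin.snoc_castSucc, hk,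
    Fin.prod_univ_castSucc, Fin.snoc_last]
  ring

end HookSum

theorem hookSum_eq_eval_abelPoly {K : Type*} [Field K] [CharZero K] (r n : ℕ) :
    hookSum (r + 1) (fun h => ((r + 1 : ℕ) : K) - (h : K)⁻¹) n =
      (abelPoly ((r : K) * (r + 1)) n).eval (r : K) := by
  induction n using Nat.strong_induction_on with
  | _ n ih =>
    cases n with
    | zero => rw [hookSum_zero, abelPoly_zero, eval_one]
    | succ n =>
      rw [hookSum_succ_eq_sum_antidiagonal, ← sum_antidiagonal_hook_factor_eval_abelPoly]
      refine Finset.sum_congr rfl fun p hp => ?_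
      rw [HasAntidiagonal.mem_antidiagonal] at hp
      have htuple : ∑ k ∈ Finset.Nat.antidiagonalTuple r p.2,
          ∏ i, hookSum (r + 1) (fun h => ((r + 1 : ℕ) : K) - (h : K)⁻¹) (k i) =
            (abelPoly ((r : K) * (r + 1)) p.2).eval ((r : K) * r) := by
        rw [← sum_antidiagonalTuple_prod_eval_abelPoly]
        refine Finset.sum_congr rfl fun k hk => Finset.prod_congr rfl fun i _ => ih _ ?_
        have := Finset.single_le_sum (fun j _ => Nat.zero_le (k j)) (mem_univ i)
        rw [Finset.Nat.mem_antidiagonalTuple.mp hk] at this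
        omega
      rw [htuple, ih p.1 (by omega)]
      push_cast
      rfl

end MTree

theorem hook_length_corollary_m_sub_inv_general (m n : ℕ) (hm : 2 ≤ m) :
    (∑ᶠ T ∈ {T : MTree m | T.internals = n},
        MTree.hookProd1 (fun h => (m : ℚ) - ((h : ℚ))⁻¹) T)
      = ((m : ℚ) - 1) ^ n * ((m : ℚ) * n + 1) ^ (n - 1) / (n.factorial : ℚ) := by
  obtain ⟨r, rfl⟩ : ∃ r, m = r + 1 := ⟨m - 1, by omega⟩
  rw [← MTree.coe_treesOfSize, finsum_mem_coe_finset]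
  change MTree.hookSum (r + 1) _ n = _
  rw [MTree.hookSum_eq_eval_abelPoly]
  cases n with
  | zero => simp
  | succ n =>
    rw [eval_abelPoly_succ, Nat.add_sub_cancel,
      show (r : ℚ) + (n + 1) * (r * (r + 1)) = r * ((r + 1) * (n + 1) + 1) by ring, mul_pow]
    push_cast
    ring

/-- **Corollary (x = -m in Theorem 1.1).**  For `m ≥ 2` and `n ≥ 1`,
`∑_{T ∈ 𝒯_{n,m}} ∏_{v ∈ 𝓘(T)} (m - 1/𝓗_v) = (m-1)^n (mn+1)^{n-1} / n!`. -/
theorem hook_length_corollary_m_sub_inv (m n : ℕ) (hm : 2 ≤ m) (hn : 1 ≤ n) :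
    (∑ᶠ T ∈ {T : MTree m | T.internals = n},
        MTree.hookProd1 (fun h => (m : ℚ) - ((h : ℚ))⁻¹) T)
      = ((m : ℚ) - 1) ^ n * ((m : ℚ) * n + 1) ^ (n - 1) / (n.factorial : ℚ) :=
  hook_length_corollary_m_sub_inv_general m n hm
end

section
/- Fix positive integers a and b. Let Ω = Ω(t) = 1 + Σ_{n≥1} Ω_n t^n be a formal power series in t with coefficients in ℚ[x] (or any commutative ℚ-algebra containing x) satisfying Ω' = x·Ω^{b+1} + a·t·Ω^b·Ω', where the prime denotes the formal derivative with respect to t. Then for every n ≥ 1, Ω_n = (x/n!) · ∏_{i=1}^{n−1} (a·i + b·x·(n−i) + x). -/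
/-!
Differentiating the equation shows that every power `Ω^(k+1)` satisfies an equation of the same
shape, `(k+b+1) (Ω^(k+1))' = (k+1)(k+b+1) x Ω^(k+b+1) + (k+1) a t (Ω^(k+b+1))'`. Because `t g'`
has coefficients `n gₙ`, comparing coefficients gives a recurrence with no convolution: the
`(m+1)`-st coefficient of `Ω^(k+1)` is a multiple of the `m`-th coefficient of `Ω^(k+b+1)`.
Induction on `m`, for all exponents at once, yields a product formula for the coefficients of
every power of `Ω`; the lemma is the case of exponent one.
-/

open PowerSeries Finset

theorem isUnit_natCast_of_ne_zero {A : Type*} [Ring A] [Algebra ℚ A] {n : ℕ} (hn : n ≠ 0) :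
    IsUnit (n : A) := by
  simpa only [map_natCast] using
    ((Nat.cast_ne_zero.2 hn : (n : ℚ) ≠ 0).isUnit.map (algebraMap ℚ A))

namespace PowerSeries

variable {R : Type*} [CommRing R]

theorem coeff_X_mul_derivative (f : R⟦X⟧) (n : ℕ) :
    coeff n (X * d⁄dX R f) = n * coeff n f := by
  rcases n with _ | n
  · simp
  · rw [coeff_succ_X_mul, coeff_derivative, mul_comm]
    push_cast
    rfl

theorem derivative_pow_succ (f : R⟦X⟧) (j : ℕ) :
    d⁄dX R (f ^ (j + 1)) = (j + 1 : R⟦X⟧) * f ^ j * d⁄dX R f := by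
  rw [derivative_pow, Nat.add_sub_cancel]
  push_cast
  ring

variable {x a : R} {b : ℕ} {Ω : R⟦X⟧}

theorem derivative_pow_succ_of_derivative_eq
    (hde : d⁄dX R Ω = C x * Ω ^ (b + 1) + C a * X * Ω ^ b * d⁄dX R Ω) (k : ℕ) :
    C (k + b + 1 : R) * d⁄dX R (Ω ^ (k + 1)) =
      C ((k + 1) * (k + b + 1) * x) * Ω ^ (k + b + 1) +
        C ((k + 1) * a) * (X * d⁄dX R (Ω ^ (k + b + 1))) := by
  rw [derivative_pow_succ, derivative_pow_succ]
  simp only [map_add, map_mul, map_natCast, map_one]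
  push_cast
  linear_combination ((k + b + 1 : R⟦X⟧) * (k + 1) * Ω ^ k) * hde

theorem coeff_pow_succ_recurrence
    (hde : d⁄dX R Ω = C x * Ω ^ (b + 1) + C a * X * Ω ^ b * d⁄dX R Ω) (m k : ℕ) :
    (k + b + 1 : R) * (m + 1) * coeff (m + 1) (Ω ^ (k + 1)) =
      (k + 1) * ((k + b + 1) * x + a * m) * coeff m (Ω ^ (k + b + 1)) := by
  have h := congrArg (coeff m) (derivative_pow_succ_of_derivative_eq hde k)
  rw [coeff_C_mul, map_add, coeff_C_mul, coeff_C_mul, coeff_derivative,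
    coeff_X_mul_derivative] at h
  linear_combination h

theorem factorial_mul_coeff_pow_succ [Algebra ℚ R]
    (hde : d⁄dX R Ω = C x * Ω ^ (b + 1) + C a * X * Ω ^ b * d⁄dX R Ω)
    (h0 : constantCoeff Ω = 1) (m k : ℕ) :
    ((m + 1).factorial : R) * coeff (m + 1) (Ω ^ (k + 1)) =
      (k + 1) * x * ∏ i ∈ Icc 1 m, (a * i + b * (m + 1 - i) * x + (k + 1) * x) := by
  induction m generalizing k with
  | zero =>
    have hrec := coeff_pow_succ_recurrence hde 0 k
    have hconst : constantCoeff (Ω ^ (k + b + 1)) = 1 := by rw [map_pow, h0, one_pow]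
    rw [coeff_zero_eq_constantCoeff_apply, hconst] at hrec
    apply (isUnit_natCast_of_ne_zero (A := R) (n := k + b + 1) (by omega)).mul_left_cancel
    rw [Icc_eq_empty (by norm_num), prod_empty, Nat.factorial_one]
    push_cast at hrec ⊢
    linear_combination hrec
  | succ m ih =>
    have hrec := coeff_pow_succ_recurrence hde (m + 1) k
    have hprod : ∏ i ∈ Icc 1 (m + 1), (a * i + b * ((m + 1 : ℕ) + 1 - i) * x + (k + 1) * x) =
        (∏ i ∈ Icc 1 m, (a * i + b * (m + 1 - i) * x + ((k + b : ℕ) + 1) * x)) *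
          (a * (m + 1) + (k + b + 1) * x) := by
      rw [prod_Icc_succ_top (Nat.le_add_left 1 m)]
      push_cast
      congr 1
      · exact prod_congr rfl fun i _ => by ring
      · ring
    apply (isUnit_natCast_of_ne_zero (A := R) (n := k + b + 1) (by omega)).mul_left_cancel
    rw [hprod, Nat.factorial_succ (m + 1)]
    have hcoeff := ih (k + b)
    push_cast at hrec hcoeff ⊢
    linear_combination ((m + 1).factorial : R) * hrec +
      ((k + 1) * ((k + b + 1) * x + a * (m + 1))) * hcoeff

theorem coeff_succ_of_derivative_eq [Algebra ℚ R]
    (hde : d⁄dX R Ω = C x * Ω ^ (b + 1) + C a * X * Ω ^ b * d⁄dX R Ω)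
    (h0 : constantCoeff Ω = 1) (m : ℕ) :
    coeff (m + 1) Ω =
      ((m + 1).factorial : ℚ)⁻¹ • (x * ∏ i ∈ Icc 1 m, (a * i + b * (m + 1 - i) * x + x)) := by
  have h := factorial_mul_coeff_pow_succ hde h0 m 0
  simp only [zero_add, pow_one, Nat.cast_zero, one_mul] at h
  rw [← h, ← nsmul_eq_mul, ← Nat.cast_smul_eq_nsmul ℚ, smul_smul,
    inv_mul_cancel₀ (by exact_mod_cast (m + 1).factorial_ne_zero), one_smul]

end PowerSeries

theorem seo_lemma_general (a b : ℕ)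
    (Ω : PowerSeries (Polynomial ℚ))
    (h0 : constantCoeff Ω = 1)
    (hde : d⁄dX (Polynomial ℚ) Ω =
      C Polynomial.X * Ω ^ (b + 1) +
        (a : PowerSeries (Polynomial ℚ)) * X * Ω ^ b * d⁄dX (Polynomial ℚ) Ω) :
    ∀ n : ℕ, 1 ≤ n →
      coeff n Ω =
        Polynomial.C ((n.factorial : ℚ)⁻¹) * Polynomial.X *
          ∏ i ∈ Finset.Icc 1 (n - 1),
            (Polynomial.C ((a : ℚ) * (i : ℚ)) +
              Polynomial.C ((b : ℚ) * ((n : ℚ) - (i : ℚ))) * Polynomial.X +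
              Polynomial.X) := by
  intro n hn
  obtain ⟨m, rfl⟩ : ∃ m, n = m + 1 := ⟨n - 1, by omega⟩
  rw [← map_natCast (C (R := Polynomial ℚ)) a] at hde
  rw [coeff_succ_of_derivative_eq hde h0 m, Polynomial.smul_eq_C_mul, mul_assoc,
    Nat.add_sub_cancel]
  congr 2
  refine prod_congr rfl fun i _ => ?_
  simp only [map_mul, map_sub, map_natCast]
  push_cast
  ring

/-- **Seo's lemma.**  Fix positive integers `a` and `b`.  If
`Ω = 1 + Σ_{n≥1} Ω_n tⁿ` is a formal power series in `t` with coefficients in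
`ℚ[x]` satisfying `Ω' = x Ω^{b+1} + a t Ω^b Ω'`, then for every `n ≥ 1`,
`Ω_n = (x/n!) ∏_{i=1}^{n-1} (a i + b x (n-i) + x)`. -/
theorem seo_lemma (a b : ℕ) (ha : 1 ≤ a) (hb : 1 ≤ b)
    (Ω : PowerSeries (Polynomial ℚ))
    (h0 : constantCoeff Ω = 1)
    (hde : d⁄dX (Polynomial ℚ) Ω =
      C Polynomial.X * Ω ^ (b + 1) +
        (a : PowerSeries (Polynomial ℚ)) * X * Ω ^ b * d⁄dX (Polynomial ℚ) Ω) :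
    ∀ n : ℕ, 1 ≤ n →
      coeff n Ω =
        Polynomial.C ((n.factorial : ℚ)⁻¹) * Polynomial.X *
          ∏ i ∈ Finset.Icc 1 (n - 1),
            (Polynomial.C ((a : ℚ) * (i : ℚ)) +
              Polynomial.C ((b : ℚ) * ((n : ℚ) - (i : ℚ))) * Polynomial.X +
              Polynomial.X) :=
  seo_lemma_general a b Ω h0 hde
end

section
/- Fix positive integers a, b and a nonnegative integer s. Let Ω = 1 + Σ_{n≥1} Ω_n t^n be a formal power series in t with coefficients in ℚ[x] satisfying Ω' = x·Ω^{b+1} + a·t·Ω^b·Ω', and let Φ = 1 + Σ_{n≥1} Φ_n t^n be the unique formal power series with constant term 1 satisfying Φ(t) = Ω(t·Φ(t)^s). Then Φ satisfies the differential equation Φ' = x·Φ^{b+s+1} + (a + s·x)·t·Φ^{b+s}·Φ', where the prime denotes the formal derivative with respect to t. -/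
/-!
Substitution of `X Φ^s` is a ring homomorphism fixing coefficients, so it carries the equation
for `Ω` to `W = x Φ^{b+1} + a X Φ^{s+b} W`, where `W = Ω'(X Φ^s)`. The chain rule gives
`Φ' = W (X Φ^s)'`, and `Φ (X Φ^s)' = Φ^{s+1} + s X Φ^s Φ'`; eliminating `W` yields the claimed
equation multiplied by `Φ`, which is a unit.
-/

namespace PowerSeries

variable {R : Type*} [CommRing R]

theorem hasSubst_X_mul (H : R⟦X⟧) : HasSubst (X * H) :=
  HasSubst.of_constantCoeff_zero' (by simp)

theorem coeff_subst_X_mul (F H : R⟦X⟧) (k : ℕ) :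
    coeff k (F.subst (X * H)) = ∑ n ∈ Finset.range (k + 1), coeff n F * coeff (k - n) (H ^ n) := by
  rw [coeff_subst' (hasSubst_X_mul H),
    finsum_eq_sum_of_support_subset (s := Finset.range (k + 1)) _ ?support]
  case support =>
    intro n hn
    rw [Finset.mem_coe, Finset.mem_range]
    by_contra hk
    exact hn (by dsimp only; rw [mul_pow, coeff_X_pow_mul', if_neg (by omega), smul_zero])
  refine Finset.sum_congr rfl fun n hn => ?_
  rw [mul_pow, coeff_X_pow_mul', if_pos (by simpa [Nat.lt_succ_iff] using hn), smul_eq_mul]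

theorem mul_derivative_X_mul_pow (Φ : R⟦X⟧) (s : ℕ) :
    Φ * d⁄dX R (X * Φ ^ s) = Φ ^ (s + 1) + (s : R⟦X⟧) * X * Φ ^ s * d⁄dX R Φ := by
  rw [Derivation.leibniz, derivative_X, Derivation.leibniz_pow]
  rcases s with _ | s
  · simp
  · simp only [smul_eq_mul, nsmul_eq_mul, Nat.add_sub_cancel]
    push_cast
    ring

theorem derivative_eq_of_eq_subst_X_mul_pow (c a : R) (b s : ℕ) {Ω Φ : R⟦X⟧} (hΦ : IsUnit Φ)
    (hsubst : Ω.subst (X * Φ ^ s) = Φ)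
    (hΩ : d⁄dX R Ω = C c * Ω ^ (b + 1) + C a * X * Ω ^ b * d⁄dX R Ω) :
    d⁄dX R Φ = C c * Φ ^ (b + s + 1) + C (a + s * c) * X * Φ ^ (b + s) * d⁄dX R Φ := by
  have hg := hasSubst_X_mul (Φ ^ s)
  set W := (d⁄dX R Ω).subst (X * Φ ^ s)
  have chain : d⁄dX R Φ = W * d⁄dX R (X * Φ ^ s) := by
    simpa only [hsubst] using derivative_subst (f := Ω) hg
  have hW : W = C c * Φ ^ (b + 1) + C a * (X * Φ ^ s) * Φ ^ b * W := by
    have := congrArg (substAlgHom (R := R) hg) hΩ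
    simp only [map_add, map_mul, map_pow, coe_substAlgHom, hsubst, subst_X hg, subst_C] at this
    exact this
  refine hΦ.mul_left_cancel ?_
  have hΦg := mul_derivative_X_mul_pow Φ s
  rw [map_add, map_mul, map_natCast]
  linear_combination Φ * chain + Φ * d⁄dX R (X * Φ ^ s) * hW + C c * Φ ^ (b + 1) * hΦg
    - C a * X * Φ ^ (s + b) * Φ * chain

end PowerSeries

open PowerSeries

theorem phi_differential_equation_general (a b s : ℕ)
    (Ω Φ : PowerSeries (Polynomial ℚ))
    (hΩ : d⁄dX (Polynomial ℚ) Ω =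
      C (R := Polynomial ℚ) Polynomial.X * Ω ^ (b + 1) +
        (a : PowerSeries (Polynomial ℚ)) * X * Ω ^ b * d⁄dX (Polynomial ℚ) Ω)
    (hΦ0 : constantCoeff (R := Polynomial ℚ) Φ = 1)
    (hΦ : ∀ k : ℕ, coeff (R := Polynomial ℚ) k Φ =
      ∑ n ∈ Finset.range (k + 1),
        coeff (R := Polynomial ℚ) n Ω * coeff (R := Polynomial ℚ) (k - n) (Φ ^ (n * s))) :
    d⁄dX (Polynomial ℚ) Φ =
      C (R := Polynomial ℚ) Polynomial.X * Φ ^ (b + s + 1) +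
        C (R := Polynomial ℚ) (Polynomial.C (a : ℚ) + (s : ℚ) • Polynomial.X) * X *
          Φ ^ (b + s) * d⁄dX (Polynomial ℚ) Φ := by
  have hsubst : Ω.subst (X * Φ ^ s) = Φ := by
    ext k
    rw [coeff_subst_X_mul, hΦ k]
    simp only [← pow_mul, mul_comm s]
  have hunit : IsUnit Φ := by
    rw [isUnit_iff_constantCoeff, hΦ0]
    exact isUnit_one
  rw [← map_natCast (C (R := Polynomial ℚ))] at hΩ
  have hcoeff : Polynomial.C (a : ℚ) + (s : ℚ) • Polynomial.X =
      (a : Polynomial ℚ) + (s : Polynomial ℚ) * Polynomial.X := by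
    rw [Polynomial.smul_eq_C_mul]
    simp
  rw [hcoeff]
  exact derivative_eq_of_eq_subst_X_mul_pow _ _ b s hunit hsubst hΩ

/-- **Remark (Sun–Zhang), differential equation for `Φ`.**  Fix positive
integers `a`, `b` and a nonnegative integer `s`.  Let `Ω = 1 + Σ_{n≥1} Ω_n tⁿ`
be a formal power series with coefficients in `ℚ[x]` satisfying
`Ω' = x Ω^{b+1} + a t Ω^b Ω'`, and let `Φ = 1 + Σ_{n≥1} Φ_n tⁿ` be the (unique)
formal power series with constant term `1` satisfying `Φ(t) = Ω(t Φ(t)^s)`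
(expressed coefficientwise: the coefficient of `tᵏ` in `Φ` equals
`Σ_{n≤k} Ω_n ⬝ [t^{k-n}] (Φ^{ns})`, since `(t Φ^s)^n = tⁿ Φ^{ns}`).
Then `Φ' = x Φ^{b+s+1} + (a + s x) t Φ^{b+s} Φ'`. -/
theorem phi_differential_equation (a b s : ℕ) (ha : 1 ≤ a) (hb : 1 ≤ b)
    (Ω Φ : PowerSeries (Polynomial ℚ))
    (hΩ0 : constantCoeff (R := Polynomial ℚ) Ω = 1)
    (hΩ : d⁄dX (Polynomial ℚ) Ω =
      C (R := Polynomial ℚ) Polynomial.X * Ω ^ (b + 1) +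
        (a : PowerSeries (Polynomial ℚ)) * X * Ω ^ b * d⁄dX (Polynomial ℚ) Ω)
    (hΦ0 : constantCoeff (R := Polynomial ℚ) Φ = 1)
    (hΦ : ∀ k : ℕ, coeff (R := Polynomial ℚ) k Φ =
      ∑ n ∈ Finset.range (k + 1),
        coeff (R := Polynomial ℚ) n Ω * coeff (R := Polynomial ℚ) (k - n) (Φ ^ (n * s))) :
    d⁄dX (Polynomial ℚ) Φ =
      C (R := Polynomial ℚ) Polynomial.X * Φ ^ (b + s + 1) +
        C (R := Polynomial ℚ) (Polynomial.C (a : ℚ) + (s : ℚ) • Polynomial.X) * X *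
          Φ ^ (b + s) * d⁄dX (Polynomial ℚ) Φ :=
  phi_differential_equation_general a b s Ω Φ hΩ hΦ0 hΦ
end

section
/- Fix positive integers a, b and a nonnegative integer s. Let Ω = 1 + Σ_{n≥1} Ω_n t^n be a formal power series in t with coefficients in ℚ[x] satisfying Ω' = x·Ω^{b+1} + a·t·Ω^b·Ω', and let Φ = 1 + Σ_{n≥1} Φ_n t^n be the unique formal power series with constant term 1 satisfying Φ(t) = Ω(t·Φ(t)^s). Then for every n ≥ 1, Φ_n = (x/n!) · ∏_{i=1}^{n−1} (a·i + b·x·(n−i) + (s·n+1)·x). -/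
/-!
Put `D = a - b x`, `A_n(z) = z/n! ∏_{i=1}^{n-1} (z + n a - i D)` and `C_n(z) = n A_n(z) / z`.
The family `A_n` is of binomial type, `∑_{i+j=k} A_i(p) A_j(q) = A_k(p + q)`, so `Ωₙ = A_n(x)` in
degrees `< m` gives `[tⁿ] Ω^r = A_n(r x)` there; with `∑_{i+j=m} A_i(p) C_j(q) = C_m(p + q)`, the
coefficient of `t^m` in the differential equation then yields `Ω_{m+1} = A_{m+1}(x)`. In the same
way `Φ = Ω(tΦ^s)` gives `Φ_n = A'_n(x)`, where `A'` is `A` with `a` replaced by `a + s x`, through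
the Hagen–Rothe type convolution `∑_{i+j=k} A_i(p) A'_j(q + i s x) = A'_k(p + q)`; the product in
`A'_n(x)`, read backwards, is the stated one.

All three convolutions are proved by induction on `k`: as polynomials in `p`, both sides change by
the same amount under `p ↦ p + D` and agree at `p = 0`, and a polynomial with a nonzero period is
constant.
-/

open Finset

noncomputable section Gould

open Polynomial

variable {A : Type*} [CommRing A] (β D : A)

def gouldProd (n : ℕ) : A[X] :=
  ∏ i ∈ range n, (X + C ((n + 1 : A) * β - (i + 1 : A) * D))

lemma eval_gouldProd (n : ℕ) (z : A) :
    (gouldProd β D n).eval z = ∏ i ∈ range n, (z + ((n + 1 : A) * β - (i + 1 : A) * D)) := by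
  simp [gouldProd, eval_prod]

lemma eval_add_gouldProd_succ (n : ℕ) (z : A) :
    (gouldProd β D (n + 1)).eval (z + D) = (z + (n + 2) * β) * (gouldProd β D n).eval (z + β) := by
  rw [eval_gouldProd, eval_gouldProd, prod_range_succ', mul_comm]
  congr 1
  · push_cast; ring
  · exact prod_congr rfl fun i _ => by push_cast; ring

lemma eval_gouldProd_succ (n : ℕ) (z : A) :
    (gouldProd β D (n + 1)).eval z =
      (z + (n + 2) * β - (n + 1) * D) * (gouldProd β D n).eval (z + β) := by
  rw [eval_gouldProd, eval_gouldProd, prod_range_succ, mul_comm]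
  congr 1
  · push_cast; ring
  · exact prod_congr rfl fun i _ => by push_cast; ring

variable [Algebra ℚ A]

def gould : ℕ → A[X]
  | 0 => 1
  | n + 1 => ((n + 1).factorial : ℚ)⁻¹ • (X * gouldProd β D n)

def gouldCompanion : ℕ → A[X]
  | 0 => 0
  | n + 1 => (n.factorial : ℚ)⁻¹ • gouldProd β D n

@[simp] lemma gould_zero : gould β D 0 = 1 := rfl

@[simp] lemma gouldCompanion_zero : gouldCompanion β D 0 = 0 := rfl

lemma eval_gould_succ (n : ℕ) (z : A) :
    (gould β D (n + 1)).eval z = ((n + 1).factorial : ℚ)⁻¹ • (z * (gouldProd β D n).eval z) := by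
  simp [gould]

lemma eval_gouldCompanion_succ (n : ℕ) (z : A) :
    (gouldCompanion β D (n + 1)).eval z = (n.factorial : ℚ)⁻¹ • (gouldProd β D n).eval z := by
  simp [gouldCompanion]

lemma eval_zero_gould (n : ℕ) : (gould β D n).eval 0 = if n = 0 then 1 else 0 := by
  cases n <;> simp [eval_gould_succ]

lemma inv_factorial_succ_smul_mul (n : ℕ) (w : A) :
    ((n + 1).factorial : ℚ)⁻¹ • ((n + 1 : A) * w) = (n.factorial : ℚ)⁻¹ • w := by
  rw [show (n + 1 : A) * w = ((n + 1 : ℚ)) • w by simp [Algebra.smul_def], smul_smul,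
    Nat.factorial_succ]
  congr 1
  push_cast
  field_simp

lemma natCast_mul_eval_gould (n : ℕ) (z : A) :
    (n : A) * (gould β D n).eval z = z * (gouldCompanion β D n).eval z := by
  cases n with
  | zero => simp
  | succ n =>
    rw [eval_gould_succ, eval_gouldCompanion_succ, mul_smul_comm, mul_smul_comm,
      ← inv_factorial_succ_smul_mul n]
    congr 1
    push_cast
    ring

lemma eval_add_sub_eval_gould_succ (k : ℕ) (z : A) :
    (gould β D (k + 1)).eval (z + D) - (gould β D (k + 1)).eval z =
      D * (gould β D k).eval (z + β) := by
  cases k with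
  | zero => simp [eval_gould_succ, gouldProd]
  | succ n =>
    rw [eval_gould_succ, eval_gould_succ, eval_gould_succ, eval_add_gouldProd_succ,
      eval_gouldProd_succ, ← smul_sub, mul_smul_comm, ← inv_factorial_succ_smul_mul (n + 1)]
    congr 1
    push_cast
    ring

lemma eval_add_sub_eval_gouldCompanion_succ (k : ℕ) (z : A) :
    (gouldCompanion β D (k + 1)).eval (z + D) - (gouldCompanion β D (k + 1)).eval z =
      D * (gouldCompanion β D k).eval (z + β) := by
  cases k with
  | zero => simp [eval_gouldCompanion_succ, gouldProd]
  | succ n =>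
    rw [eval_gouldCompanion_succ, eval_gouldCompanion_succ, eval_gouldCompanion_succ,
      eval_add_gouldProd_succ, eval_gouldProd_succ, ← smul_sub, mul_smul_comm,
      ← inv_factorial_succ_smul_mul n]
    congr 1
    ring

lemma eval_gould_add_mul_eval_gouldCompanion (k : ℕ) (z : A) :
    (gould β D k).eval (z + β) + β * (gouldCompanion β D k).eval (z + β) =
      (gouldCompanion β D (k + 1)).eval (z + D) := by
  cases k with
  | zero => simp [eval_gouldCompanion_succ, gouldProd]
  | succ n =>
    rw [eval_gould_succ, eval_gouldCompanion_succ, eval_gouldCompanion_succ,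
      eval_add_gouldProd_succ, ← inv_factorial_succ_smul_mul n, mul_smul_comm, ← smul_add]
    congr 1
    ring

end Gould

section Convolution

open Polynomial

theorem Polynomial.eq_zero_of_periodic {A : Type*} [CommRing A] [IsDomain A] [CharZero A]
    {D : A} (hD : D ≠ 0) {F : A[X]} (hF : Function.Periodic (fun p => F.eval p) D)
    (h0 : F.eval 0 = 0) : F = 0 := by
  refine eq_zero_of_infinite_isRoot F <|
    Set.infinite_of_injective_forall_mem (f := fun m : ℕ => (m : A) * D)
      (fun m n h => by simpa [hD] using h) fun m => ?_
  simpa [h0] using hF.nat_mul_eq m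

variable {A : Type*} [CommRing A] [IsDomain A] [CharZero A] [Algebra ℚ A] {β σ D : A}

theorem sum_antidiagonal_eval_gould_mul (hD : D ≠ 0) {c : ℕ → A[X]} {e : A}
    (hc₀ : c 0 = C e)
    (hc : ∀ k z, (c (k + 1)).eval (z + D) - (c (k + 1)).eval z = D * (c k).eval (z + β + σ))
    (k : ℕ) (p q : A) :
    ∑ ij ∈ antidiagonal k, (gould β D ij.1).eval p * (c ij.2).eval (q + ij.1 * σ) =
      (c k).eval (p + q) := by
  induction k generalizing p q with
  | zero => simp [hc₀]
  | succ k ih =>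
    set L : A → A := fun p =>
      ∑ ij ∈ antidiagonal (k + 1), (gould β D ij.1).eval p * (c ij.2).eval (q + ij.1 * σ)
    have hL : ∀ p, L (p + D) - L p = D * (c k).eval (p + q + β + σ) := by
      intro p
      simp only [L]
      rw [← sum_sub_distrib, Finset.Nat.sum_antidiagonal_succ]
      simp only [← sub_mul, eval_add_sub_eval_gould_succ, gould_zero, eval_one, sub_self,
        zero_add, mul_assoc, ← mul_sum]
      rw [show p + q + β + σ = p + β + (q + σ) by ring, ← ih]
      refine congrArg _ (sum_congr rfl fun ij _ => ?_)
      rw [Nat.cast_add, Nat.cast_one, add_mul, one_mul, add_assoc, add_comm σ]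
    set F : A[X] := ∑ ij ∈ antidiagonal (k + 1),
      gould β D ij.1 * C ((c ij.2).eval (q + ij.1 * σ)) - (c (k + 1)).comp (X + C q)
    have hF : ∀ p, F.eval p = L p - (c (k + 1)).eval (p + q) := by
      intro p
      simp [F, L, eval_finsetSum]
    have hF0 : F = 0 := by
      refine eq_zero_of_periodic hD (fun p => ?_) ?_
      · show F.eval (p + D) = F.eval p
        rw [hF, hF, add_right_comm]
        linear_combination hL p - hc k (p + q)
      · simp [hF, L, Finset.Nat.sum_antidiagonal_succ, eval_zero_gould]
    simpa [hF, sub_eq_zero] using congrArg (eval p) hF0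

theorem sum_antidiagonal_eval_gould_mul_eval_gould_add (hD : D ≠ 0) (k : ℕ) (p q : A) :
    ∑ ij ∈ antidiagonal k, (gould β D ij.1).eval p * (gould (β + σ) D ij.2).eval (q + ij.1 * σ) =
      (gould (β + σ) D k).eval (p + q) :=
  sum_antidiagonal_eval_gould_mul hD (e := 1) (by simp)
    (fun k z => by rw [eval_add_sub_eval_gould_succ, ← add_assoc]) k p q

theorem sum_antidiagonal_eval_gould_mul_eval_gould (hD : D ≠ 0) (k : ℕ) (p q : A) :
    ∑ ij ∈ antidiagonal k, (gould β D ij.1).eval p * (gould β D ij.2).eval q =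
      (gould β D k).eval (p + q) := by
  simpa using sum_antidiagonal_eval_gould_mul_eval_gould_add (σ := 0) hD k p q

theorem sum_antidiagonal_eval_gould_mul_eval_gouldCompanion (hD : D ≠ 0) (k : ℕ) (p q : A) :
    ∑ ij ∈ antidiagonal k, (gould β D ij.1).eval p * (gouldCompanion β D ij.2).eval q =
      (gouldCompanion β D k).eval (p + q) := by
  simpa using sum_antidiagonal_eval_gould_mul (σ := 0) hD (e := 0) (by simp)
    (fun k z => by simpa using eval_add_sub_eval_gouldCompanion_succ β D k z) k p q

end Convolution

open PowerSeries

theorem PowerSeries.coeff_X_mul_derivative_s11 {R : Type*} [CommRing R] (f : R⟦X⟧) (n : ℕ) :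
    coeff n (X * d⁄dX R f) = n * coeff n f := by
  cases n with
  | zero => simp
  | succ n => rw [coeff_succ_X_mul, coeff_derivative, mul_comm]; push_cast; rfl

section PowerSeries

variable {A : Type*} [CommRing A] [IsDomain A] [CharZero A] [Algebra ℚ A] {β D : A}

theorem coeff_pow_eq_eval_gould (hD : D ≠ 0) {f : A⟦X⟧} {z : A} {N : ℕ}
    (hf : ∀ n < N, coeff n f = (gould β D n).eval z) (r : ℕ) :
    ∀ n < N, coeff n (f ^ r) = (gould β D n).eval (r * z) := by
  induction r with
  | zero => intro n _; simp [coeff_one, eval_zero_gould]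
  | succ r ih =>
    intro n hn
    have hterm : ∀ ij ∈ antidiagonal n, coeff ij.1 f * coeff ij.2 (f ^ r) =
        (gould β D ij.1).eval z * (gould β D ij.2).eval (r * z) := fun ij hij => by
      rw [hf _ ((HasAntidiagonal.antidiagonal.fst_le hij).trans_lt hn),
        ih _ ((HasAntidiagonal.antidiagonal.snd_le hij).trans_lt hn)]
    rw [pow_succ', coeff_mul, sum_congr rfl hterm, sum_antidiagonal_eval_gould_mul_eval_gould hD]
    push_cast
    rw [add_one_mul, add_comm]

theorem coeff_eq_eval_gould_of_derivative_eq {a x : A} {b : ℕ} (hD : a - b * x ≠ 0) {Ω : A⟦X⟧}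
    (hΩ0 : constantCoeff Ω = 1)
    (hΩ : d⁄dX A Ω = C x * Ω ^ (b + 1) + C a * X * Ω ^ b * d⁄dX A Ω) (n : ℕ) :
    coeff n Ω = (gould a (a - b * x) n).eval x := by
  induction n using Nat.strong_induction_on with
  | _ n ih =>
  cases n with
  | zero => simp [hΩ0]
  | succ m =>
    have hpow := coeff_pow_eq_eval_gould hD ih
    have hm : coeff (m + 1) Ω * (m + 1) =
        x * coeff m (Ω ^ (b + 1)) +
          a * ∑ ij ∈ antidiagonal m, coeff ij.1 (Ω ^ b) * (ij.2 * coeff ij.2 Ω) := by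
      have := congrArg (coeff m) hΩ
      rwa [show C a * X * Ω ^ b * d⁄dX A Ω = C a * (Ω ^ b * (X * d⁄dX A Ω)) by ring,
        coeff_derivative, map_add, coeff_C_mul, coeff_C_mul, coeff_mul,
        sum_congr rfl fun ij _ => by rw [coeff_X_mul_derivative_s11]] at this
    have hterm : ∀ ij ∈ antidiagonal m, coeff ij.1 (Ω ^ b) * (ij.2 * coeff ij.2 Ω) =
        x * ((gould a (a - b * x) ij.1).eval (b * x) *
          (gouldCompanion a (a - b * x) ij.2).eval x) := fun ij hij => by
      rw [hpow b _ (Nat.lt_succ_of_le (HasAntidiagonal.antidiagonal.fst_le hij)),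
        ih _ (Nat.lt_succ_of_le (HasAntidiagonal.antidiagonal.snd_le hij)), natCast_mul_eval_gould]
      ring
    rw [hpow (b + 1) m m.lt_succ_self, sum_congr rfl hterm, ← mul_sum,
      sum_antidiagonal_eval_gould_mul_eval_gouldCompanion hD] at hm
    have hstep : (m + 1 : ℕ) * (gould a (a - b * x) (m + 1)).eval x =
        x * (gould a (a - b * x) m).eval ((b + 1 : ℕ) * x) +
          a * (x * (gouldCompanion a (a - b * x) m).eval (b * x + x)) := by
      have h := eval_gould_add_mul_eval_gouldCompanion a (a - b * x) m (x - (a - b * x))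
      rw [sub_add_cancel, show x - (a - b * x) + a = (b + 1 : ℕ) * x by push_cast; ring] at h
      rw [natCast_mul_eval_gould, ← h, show (b : A) * x + x = (b + 1 : ℕ) * x by push_cast; ring]
      ring
    exact mul_right_cancel₀ (Nat.cast_add_one_ne_zero m) (by rw [hm, ← hstep]; push_cast; ring)

theorem coeff_eq_eval_gould_of_eq_comp {x : A} {s : ℕ} (hD : D ≠ 0) {Ω Φ : A⟦X⟧}
    (hΩ : ∀ n, coeff n Ω = (gould β D n).eval x)
    (hΦ : ∀ k, coeff k Φ = ∑ n ∈ range (k + 1), coeff n Ω * coeff (k - n) (Φ ^ (n * s)))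
    (k : ℕ) : coeff k Φ = (gould (β + s * x) D k).eval x := by
  induction k using Nat.strong_induction_on with
  | _ k ih =>
  have hpow := coeff_pow_eq_eval_gould hD ih
  have hterm : ∀ ij ∈ antidiagonal k, coeff ij.1 Ω * coeff ij.2 (Φ ^ (ij.1 * s)) =
      (gould β D ij.1).eval x * (gould (β + s * x) D ij.2).eval (0 + ij.1 * (s * x)) := by
    rintro ⟨i, j⟩ hij
    rw [HasAntidiagonal.mem_antidiagonal] at hij
    rw [hΩ]
    rcases Nat.eq_zero_or_pos i with rfl | hi
    · simp [coeff_one, eval_zero_gould]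
    · rw [hpow _ _ (by omega), zero_add, Nat.cast_mul, mul_assoc]
  rw [hΦ, ← Finset.Nat.sum_antidiagonal_eq_sum_range_succ
    (fun i j => coeff i Ω * coeff j (Φ ^ (i * s))), sum_congr rfl hterm,
    sum_antidiagonal_eval_gould_mul_eval_gould_add hD, add_zero]

end PowerSeries

theorem eval_X_gould_eq_prod_Icc (a b s n : ℕ) (hn : 1 ≤ n) :
    (gould ((a : Polynomial ℚ) + (s : Polynomial ℚ) * Polynomial.X)
      ((a : Polynomial ℚ) - (b : Polynomial ℚ) * Polynomial.X) n).eval Polynomial.X =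
      Polynomial.C ((n.factorial : ℚ)⁻¹) * Polynomial.X *
        ∏ i ∈ Icc 1 (n - 1),
          (Polynomial.C ((a : ℚ) * (i : ℚ)) +
            Polynomial.C ((b : ℚ) * ((n : ℚ) - (i : ℚ))) * Polynomial.X +
            Polynomial.C ((s : ℚ) * (n : ℚ) + 1) * Polynomial.X) := by
  obtain ⟨m, rfl⟩ : ∃ m, n = m + 1 := ⟨n - 1, by omega⟩
  rw [eval_gould_succ, eval_gouldProd, Polynomial.smul_eq_C_mul, mul_assoc, Nat.add_sub_cancel,
    ← Ico_add_one_right_eq_Icc, prod_Ico_eq_prod_range, Nat.add_sub_cancel, ← prod_range_reflect]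
  refine congrArg _ (congrArg _ (prod_congr rfl fun j hj => ?_))
  rw [mem_range] at hj
  rw [Nat.sub_sub, Nat.cast_sub (by omega : 1 + j ≤ m)]
  simp only [map_add, map_sub, map_mul, map_natCast, map_one, Nat.cast_add, Nat.cast_one]
  ring

theorem phi_coeff_formula_general (a b s : ℕ) (ha : 1 ≤ a)
    (Ω Φ : PowerSeries (Polynomial ℚ))
    (hΩ0 : constantCoeff Ω = 1)
    (hΩ : d⁄dX (Polynomial ℚ) Ω =
      C (Polynomial.X : Polynomial ℚ) * Ω ^ (b + 1) +
        (a : PowerSeries (Polynomial ℚ)) * X * Ω ^ b * d⁄dX (Polynomial ℚ) Ω)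
    (hΦ : ∀ k : ℕ, coeff k Φ =
      ∑ n ∈ Finset.range (k + 1),
        coeff n Ω * coeff (k - n) (Φ ^ (n * s))) :
    ∀ n : ℕ, 1 ≤ n →
      coeff n Φ =
        Polynomial.C ((n.factorial : ℚ)⁻¹) * Polynomial.X *
          ∏ i ∈ Finset.Icc 1 (n - 1),
            (Polynomial.C ((a : ℚ) * (i : ℚ)) +
              Polynomial.C ((b : ℚ) * ((n : ℚ) - (i : ℚ))) * Polynomial.X +
              Polynomial.C ((s : ℚ) * (n : ℚ) + 1) * Polynomial.X) := by
  have hD : (a : Polynomial ℚ) - (b : Polynomial ℚ) * Polynomial.X ≠ 0 := fun h => by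
    simpa [Nat.one_le_iff_ne_zero.mp ha] using congrArg (Polynomial.eval 0) h
  rw [← map_natCast (C (R := Polynomial ℚ)) a] at hΩ
  have hΩn := coeff_eq_eval_gould_of_derivative_eq hD hΩ0 hΩ
  intro n hn
  rw [coeff_eq_eval_gould_of_eq_comp hD hΩn hΦ, eval_X_gould_eq_prod_Icc a b s n hn]

/-- **Remark (Sun–Zhang), explicit coefficients of `Φ`.**  Fix positive
integers `a`, `b` and a nonnegative integer `s`.  Let `Ω = 1 + Σ_{n≥1} Ω_n tⁿ`
be a formal power series with coefficients in `ℚ[x]` satisfying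
`Ω' = x Ω^{b+1} + a t Ω^b Ω'`, and let `Φ = 1 + Σ_{n≥1} Φ_n tⁿ` be the (unique)
formal power series with constant term `1` satisfying `Φ(t) = Ω(t Φ(t)^s)`
(expressed coefficientwise: the coefficient of `tᵏ` in `Φ` equals
`Σ_{n≤k} Ω_n ⬝ [t^{k-n}] (Φ^{ns})`, since `(t Φ^s)^n = tⁿ Φ^{ns}`).
Then for every `n ≥ 1`,
`Φ_n = (x/n!) ∏_{i=1}^{n-1} (a i + b x (n-i) + (s n + 1) x)`. -/
theorem phi_coeff_formula (a b s : ℕ) (ha : 1 ≤ a) (hb : 1 ≤ b)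
    (Ω Φ : PowerSeries (Polynomial ℚ))
    (hΩ0 : constantCoeff Ω = 1)
    (hΩ : d⁄dX (Polynomial ℚ) Ω =
      C (Polynomial.X : Polynomial ℚ) * Ω ^ (b + 1) +
        (a : PowerSeries (Polynomial ℚ)) * X * Ω ^ b * d⁄dX (Polynomial ℚ) Ω)
    (hΦ0 : constantCoeff Φ = 1)
    (hΦ : ∀ k : ℕ, coeff k Φ =
      ∑ n ∈ Finset.range (k + 1),
        coeff n Ω * coeff (k - n) (Φ ^ (n * s))) :
    ∀ n : ℕ, 1 ≤ n →
      coeff n Φ =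
        Polynomial.C ((n.factorial : ℚ)⁻¹) * Polynomial.X *
          ∏ i ∈ Finset.Icc 1 (n - 1),
            (Polynomial.C ((a : ℚ) * (i : ℚ)) +
              Polynomial.C ((b : ℚ) * ((n : ℚ) - (i : ℚ))) * Polynomial.X +
              Polynomial.C ((s : ℚ) * (n : ℚ) + 1) * Polynomial.X) :=
  phi_coeff_formula_general a b s ha Ω Φ hΩ0 hΩ hΦ
end
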